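/- For m < n and an infinite Γ, σ_1(Γ) is homeomorphic to a clopen subset of σ_n(Γ); consequently σ_1(Γ)^ω is homeomorphic to a retract of ∏_{i<ω} σ_{k_i}(Γ) for any sequence (k_i) of positive integers. -/

import Mathlib

def sigmaSet (Γ : Type*) (n : ℕ) : Set (Γ → Bool) :=
  {x | {γ | x γ = true}.Finite ∧ {γ | x γ = true}.ncard ≤ n}

/-! Since `Γ` is infinite, `Γ ≃ Γ ⊕ Fin (n - k)`, and inside `σ_n(Γ ⊕ Fin (n - k))` the sets
containing all of `Fin (n - k)` form a clopen set, homeomorphic to `σ_k(Γ)` by forgetting that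
part. A product of nonempty clopen sets is a retract of the product space: on each factor,
collapse the complement of the clopen set onto one of its points. -/

open Set

def Homeomorph.univPi {ι : Type*} {X : ι → Type*} [∀ i, TopologicalSpace (X i)]
    (C : ∀ i, Set (X i)) : univ.pi C ≃ₜ ∀ i, C i where
  toEquiv := Equiv.Set.univPi C
  continuous_toFun :=
    continuous_pi fun i => ((continuous_apply i).comp continuous_subtype_val).subtype_mk _
  continuous_invFun :=
    (continuous_pi fun i => continuous_subtype_val.comp (continuous_apply i)).subtype_mk _

theorem exists_retraction_onto_univ_pi_of_isClopen {ι : Type*} {X : ι → Type*}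
    [∀ i, TopologicalSpace (X i)] {C : ∀ i, Set (X i)} (hC : ∀ i, IsClopen (C i))
    {c : ∀ i, X i} (hc : c ∈ univ.pi C) :
    ∃ r : (∀ i, X i) → ∀ i, X i,
      Continuous r ∧ range r = univ.pi C ∧ ∀ a ∈ univ.pi C, r a = a := by
  classical
  refine ⟨fun x i => (C i).piecewise id (fun _ => c i) (x i), ?_, ?_, ?_⟩
  · refine continuous_pi fun i => ?_
    have : Continuous ((C i).piecewise id fun _ => c i) :=
      continuous_id.piecewise (by simp [(hC i).frontier_eq]) continuous_const
    exact this.comp (continuous_apply i)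
  · refine subset_antisymm ?_ fun a ha => ⟨a, ?_⟩
    · rintro _ ⟨x, rfl⟩ i -
      by_cases hx : x i ∈ C i
      · simp [hx]
      · simpa [hx] using hc i trivial
    · ext i; simp [ha i trivial]
  · intro a ha; ext i; simp [ha i trivial]

section sigmaSet

variable {Γ Δ ι : Type*}

theorem const_false_mem_sigmaSet (n : ℕ) : (fun _ => false) ∈ sigmaSet Γ n := by
  simp [sigmaSet]

theorem comp_equiv_mem_sigmaSet_iff (e : Γ ≃ Δ) {n : ℕ} {x : Δ → Bool} :
    x ∘ e ∈ sigmaSet Γ n ↔ x ∈ sigmaSet Δ n := by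
  have hsupp : {γ | (x ∘ e) γ = true} = e.symm '' {δ | x δ = true} := by
    ext γ; simp [Equiv.image_eq_preimage_symm]
  simp only [sigmaSet, mem_ofPred_eq, hsupp, finite_image_iff e.symm.injective.injOn,
    ncard_image_of_injective _ e.symm.injective]

def Homeomorph.sigmaSetCongr (e : Γ ≃ Δ) (n : ℕ) : sigmaSet Γ n ≃ₜ sigmaSet Δ n :=
  (Homeomorph.piCongrLeft (Y := fun _ => Bool) e).subtype fun x => by
    rw [← comp_equiv_mem_sigmaSet_iff e]
    congr!
    ext γ
    exact (Equiv.piCongrLeft_apply_apply (fun _ => Bool) e x γ).symm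

theorem sumElim_const_true_mem_sigmaSet_iff [Finite ι] {k : ℕ} {x : Γ → Bool} :
    Sum.elim x (fun _ : ι => true) ∈ sigmaSet (Γ ⊕ ι) (k + Nat.card ι) ↔ x ∈ sigmaSet Γ k := by
  have hsupp : {s | Sum.elim x (fun _ : ι => true) s = true} =
      Sum.inl '' {γ | x γ = true} ∪ range Sum.inr := by
    ext (γ | i) <;> simp
  have hdisj : Disjoint (Sum.inl '' {γ | x γ = true}) (range (Sum.inr : ι → Γ ⊕ ι)) := by
    simp [disjoint_left]
  simp only [sigmaSet, mem_ofPred_eq, hsupp, finite_union,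
    finite_image_iff Sum.inl_injective.injOn, finite_range, and_true]
  refine and_congr_right fun hfin => ?_
  rw [ncard_union_eq hdisj (hfin.image _), ncard_image_of_injective _ Sum.inl_injective,
    ← image_univ, ncard_image_of_injective _ Sum.inr_injective, ncard_univ, add_le_add_iff_right]

theorem sumElim_comp_inl_of_forall_inr {y : Γ ⊕ ι → Bool} (hy : ∀ i, y (Sum.inr i) = true) :
    Sum.elim (y ∘ Sum.inl) (fun _ => true) = y := by
  ext (γ | i)
  · rfl
  · exact (hy i).symm

theorem continuous_sumElim_const {c : ι → Bool} :
    Continuous fun x : Γ → Bool => Sum.elim x c :=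
  continuous_pi fun
    | .inl γ => continuous_apply γ
    | .inr _ => continuous_const

theorem exists_isClopen_homeomorph_sigmaSet_sum [Finite ι] {k n : ℕ} (hn : k + Nat.card ι = n) :
    ∃ C : Set (sigmaSet (Γ ⊕ ι) n), IsClopen C ∧ Nonempty (sigmaSet Γ k ≃ₜ C) := by
  subst hn
  refine ⟨{y | ∀ i, y.1 (Sum.inr i) = true}, ?_, ⟨?_⟩⟩
  · simp only [ofPred_forall]
    exact isClopen_iInter_of_finite fun i =>
      (isClopen_discrete {true}).preimage ((continuous_apply _).comp continuous_subtype_val)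
  · exact
    { toFun x := ⟨⟨Sum.elim x.1 fun _ => true, sumElim_const_true_mem_sigmaSet_iff.2 x.2⟩,
        fun _ => rfl⟩
      invFun y := ⟨y.1.1 ∘ Sum.inl, sumElim_const_true_mem_sigmaSet_iff.1 <| by
        rw [sumElim_comp_inl_of_forall_inr y.2]; exact y.1.2⟩
      left_inv _ := rfl
      right_inv y := Subtype.ext <| Subtype.ext <| sumElim_comp_inl_of_forall_inr y.2
      continuous_toFun :=
        ((continuous_sumElim_const.comp continuous_subtype_val).subtype_mk _).subtype_mk _
      continuous_invFun := ((Pi.continuous_precomp Sum.inl).comp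
        (continuous_subtype_val.comp continuous_subtype_val)).subtype_mk _ }

theorem exists_isClopen_homeomorph_sigmaSet [Infinite Γ] {k n : ℕ} (hkn : k ≤ n) :
    ∃ C : Set (sigmaSet Γ n), IsClopen C ∧ Nonempty (sigmaSet Γ k ≃ₜ C) := by
  have hcard : Cardinal.mk (Γ ⊕ Fin (n - k)) = Cardinal.mk Γ := by
    simpa using Cardinal.add_nat_eq (n - k) (Cardinal.aleph0_le_mk Γ)
  obtain ⟨e⟩ := Cardinal.eq.1 hcard
  have hn : k + Nat.card (Fin (n - k)) = n := by simp [Nat.add_sub_cancel' hkn]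
  obtain ⟨D, hD, ⟨f⟩⟩ := exists_isClopen_homeomorph_sigmaSet_sum (Γ := Γ) hn
  let h := Homeomorph.sigmaSetCongr e.symm n
  exact ⟨h ⁻¹' D, hD.preimage h.continuous, ⟨f.trans (h.sets rfl).symm⟩⟩

end sigmaSet

/-- `σ_1(Γ)` is homeomorphic to a clopen subset of `σ_n(Γ)` (for `n ≥ 1`); consequently
`σ_1(Γ)^ω` is homeomorphic to a retract of `∏_{i<ω} σ_{k_i}(Γ)` for any sequence of
positive integers `(k_i)`. -/
theorem stmt_17 (Γ : Type*) [Infinite Γ] (n : ℕ) (hn : 1 ≤ n) (kseq : ℕ → ℕ)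
    (hk : ∀ i, 0 < kseq i) :
    (∃ C : Set (sigmaSet Γ n), IsClopen C ∧ Nonempty ((sigmaSet Γ 1) ≃ₜ C)) ∧
    (∃ (A : Set (∀ i : ℕ, sigmaSet Γ (kseq i)))
       (r : (∀ i : ℕ, sigmaSet Γ (kseq i)) → (∀ i : ℕ, sigmaSet Γ (kseq i))),
        Continuous r ∧ Set.range r = A ∧ (∀ a ∈ A, r a = a) ∧
        Nonempty ((ℕ → (sigmaSet Γ 1)) ≃ₜ A)) := by
  refine ⟨exists_isClopen_homeomorph_sigmaSet hn, ?_⟩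
  choose C hC f using fun i => exists_isClopen_homeomorph_sigmaSet (Γ := Γ) (hk i)
  have hc : (fun i => ((f i).some ⟨_, const_false_mem_sigmaSet 1⟩ : sigmaSet Γ (kseq i))) ∈
      univ.pi C := fun i _ => Subtype.prop _
  obtain ⟨r, hr, hrange, hretr⟩ := exists_retraction_onto_univ_pi_of_isClopen hC hc
  exact ⟨_, r, hr, hrange, hretr,
    ⟨(Homeomorph.piCongrRight fun i => (f i).some).trans (Homeomorph.univPi C).symm⟩⟩
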